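/- Solution of the quantum inverse scattering problem. The operator T(η/2) = A(η/2) + D(η/2) is invertible, and for every site j = 1,…,M: σ^x_j = T(η/2)^{j−1} ∘ (B(η/2) + C(η/2)) ∘ T(η/2)^{−j}, σ^y_j = T(η/2)^{j−1} ∘ i(B(η/2) − C(η/2)) ∘ T(η/2)^{−j}, and σ^z_j = T(η/2)^{j−1} ∘ (A(η/2) − D(η/2)) ∘ T(η/2)^{−j}. -/

import Mathlib

open Complex Matrix Finset

noncomputable section

/-- Spin configurations of a chain of length `M` (value `0` = spin up). -/
abbrev Conf (M : ℕ) := Fin M → Fin 2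

/-- The quantum space `H = (ℂ²)^{⊗M}`, realized as functions on configurations. -/
abbrev QS (M : ℕ) := Conf M → ℂ

/-- The operator acting at site `n` by the 2×2 matrix `A` and as identity elsewhere. -/
def siteOp {M : ℕ} (n : Fin M) (A : Matrix (Fin 2) (Fin 2) ℂ) :
    Module.End ℂ (QS M) where
  toFun f := fun s => ∑ j : Fin 2, A (s n) j * f (Function.update s n j)
  map_add' f g := by
    funext s
    simp [mul_add, Finset.sum_add_distrib]
  map_smul' c f := by
    funext s
    simp only [Pi.smul_apply, smul_eq_mul, RingHom.id_apply, Finset.mul_sum]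
    exact Finset.sum_congr rfl fun j _ => by ring

def pauliX : Matrix (Fin 2) (Fin 2) ℂ := !![0, 1; 1, 0]
def pauliY : Matrix (Fin 2) (Fin 2) ℂ := !![0, -Complex.I; Complex.I, 0]
def pauliZ : Matrix (Fin 2) (Fin 2) ℂ := !![1, 0; 0, -1]
/-- `σ⁺ = (σˣ + iσʸ)/2`. -/
def pauliP : Matrix (Fin 2) (Fin 2) ℂ := !![0, 1; 0, 0]
/-- `σ⁻ = (σˣ − iσʸ)/2`. -/
def pauliM : Matrix (Fin 2) (Fin 2) ℂ := !![0, 0; 1, 0]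

/-- The `L`-operator at site `n` with spectral parameter `lam`. -/
def Lmat (M : ℕ) (η lam : ℂ) (n : Fin M) :
    Matrix (Fin 2) (Fin 2) (Module.End ℂ (QS M)) :=
  !![siteOp n !![Complex.sinh (lam + η/2), 0; 0, Complex.sinh (lam - η/2)],
       Complex.sinh η • siteOp n pauliM;
     Complex.sinh η • siteOp n pauliP,
       siteOp n !![Complex.sinh (lam - η/2), 0; 0, Complex.sinh (lam + η/2)]]

/-- The monodromy matrix `T(λ) = L_M(λ) ⋯ L_1(λ)`. -/
def Tmon (M : ℕ) (η lam : ℂ) : Matrix (Fin 2) (Fin 2) (Module.End ℂ (QS M)) :=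
  ((List.ofFn fun n : Fin M => Lmat M η lam n).reverse).prod

def Aop (M : ℕ) (η lam : ℂ) : Module.End ℂ (QS M) := Tmon M η lam 0 0
def Bop (M : ℕ) (η lam : ℂ) : Module.End ℂ (QS M) := Tmon M η lam 0 1
def Cop (M : ℕ) (η lam : ℂ) : Module.End ℂ (QS M) := Tmon M η lam 1 0
def Dop (M : ℕ) (η lam : ℂ) : Module.End ℂ (QS M) := Tmon M η lam 1 1

/-- The twisted transfer matrix `T_κ(μ) = A(μ) + κ D(μ)`. -/
def Tk (M : ℕ) (η κ μ : ℂ) : Module.End ℂ (QS M) := Aop M η μ + κ • Dop M η μ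

/-- The transfer matrix `T(μ) = A(μ) + D(μ)`. -/
def Ttm (M : ℕ) (η μ : ℂ) : Module.End ℂ (QS M) := Tk M η 1 μ

/-- The all-spins-up configuration. -/
def upC (M : ℕ) : Conf M := fun _ => 0

/-- The vacuum vector `|0⟩` (all spins up). -/
def vac (M : ℕ) : QS M := fun s => if s = upC M then 1 else 0

/-- The vacuum expectation value `⟨0|O|0⟩`. -/
def vev {M : ℕ} (O : Module.End ℂ (QS M)) : ℂ := (O (vac M)) (upC M)

/-- `∏_{j=1}^N B(λ_j)`. -/
def prodB (M : ℕ) (η : ℂ) {N : ℕ} (lam : Fin N → ℂ) : Module.End ℂ (QS M) :=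
  (List.ofFn fun j : Fin N => Bop M η (lam j)).prod

/-- `∏_{j=1}^N C(λ_j)`. -/
def prodC (M : ℕ) (η : ℂ) {N : ℕ} (lam : Fin N → ℂ) : Module.End ℂ (QS M) :=
  (List.ofFn fun j : Fin N => Cop M η (lam j)).prod

/-- `a(μ) = sinh^M(μ + η/2)`. -/
def af (M : ℕ) (η μ : ℂ) : ℂ := (Complex.sinh (μ + η/2)) ^ M

/-- `d(μ) = sinh^M(μ − η/2)`. -/
def df (M : ℕ) (η μ : ℂ) : ℂ := (Complex.sinh (μ - η/2)) ^ M

/-- `Y_κ(μ|λ)`. -/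
def Yf (M : ℕ) (η κ : ℂ) {N : ℕ} (μ : ℂ) (lam : Fin N → ℂ) : ℂ :=
  af M η μ * ∏ k, Complex.sinh (lam k - μ + η)
    + κ * df M η μ * ∏ k, Complex.sinh (lam k - μ - η)

/-- `τ_κ(μ|λ)`. -/
def tauf (M : ℕ) (η κ : ℂ) {N : ℕ} (μ : ℂ) (lam : Fin N → ℂ) : ℂ :=
  af M η μ * ∏ k, (Complex.sinh (lam k - μ + η) / Complex.sinh (lam k - μ))
    + κ * df M η μ * ∏ k, (Complex.sinh (μ - lam k + η) / Complex.sinh (μ - lam k))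

/-- The twisted Bethe equations `Y_κ(λ_j|λ) = 0`, `j = 1,…,N`. -/
def BetheSol (M : ℕ) (η κ : ℂ) {N : ℕ} (lam : Fin N → ℂ) : Prop :=
  ∀ j, Yf M η κ (lam j) lam = 0

/-- Admissibility: `d(λ_j) ∏_{k≠j} sinh(λ_j − λ_k + η) ≠ 0` for all `j`. -/
def Admissible (M : ℕ) (η : ℂ) {N : ℕ} (lam : Fin N → ℂ) : Prop :=
  ∀ j, df M η (lam j) * ∏ k ∈ Finset.univ.erase j, Complex.sinh (lam j - lam k + η) ≠ 0

/-- The bare one-particle energy `E(λ)`. -/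
def Ebare (η lam : ℂ) : ℂ :=
  2 * (Complex.sinh η) ^ 2 / (Complex.sinh (lam + η/2) * Complex.sinh (lam - η/2))

/-- `t(λ,μ) = sinh η /(sinh(λ−μ) sinh(λ−μ+η))`. -/
def tfun (η lam mu : ℂ) : ℂ :=
  Complex.sinh η / (Complex.sinh (lam - mu) * Complex.sinh (lam - mu + η))

/-- The matrix `Ω_κ(λ,μ|ν)`. -/
def Omega (M : ℕ) (η κ : ℂ) {n n' : ℕ} (lam mu : Fin n → ℂ) (nu : Fin n' → ℂ) :
    Matrix (Fin n) (Fin n) ℂ :=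
  Matrix.of fun j k =>
    af M η (mu k) * tfun η (lam j) (mu k) * ∏ a, Complex.sinh (nu a - mu k + η)
      - κ * df M η (mu k) * tfun η (mu k) (lam j) * ∏ a, Complex.sinh (nu a - mu k - η)

/-- Exponential of an endomorphism of the (finite-dimensional) quantum space. -/
def endExp {M : ℕ} (A : Module.End ℂ (QS M)) : Module.End ℂ (QS M) :=
  Matrix.toLin (Pi.basisFun ℂ (Conf M)) (Pi.basisFun ℂ (Conf M))
    (NormedSpace.exp
      (LinearMap.toMatrix (Pi.basisFun ℂ (Conf M)) (Pi.basisFun ℂ (Conf M)) A))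

/-- Entrywise complex derivative of an operator-valued function at a point. -/
def endDeriv {M : ℕ} (F : ℂ → Module.End ℂ (QS M)) (z : ℂ) : Module.End ℂ (QS M) :=
  Matrix.toLin (Pi.basisFun ℂ (Conf M)) (Pi.basisFun ℂ (Conf M))
    (Matrix.of fun i j =>
      deriv (fun w =>
        LinearMap.toMatrix (Pi.basisFun ℂ (Conf M)) (Pi.basisFun ℂ (Conf M)) (F w) i j) z)

/-- The next site, with periodic identification `M+1 ≡ 1`. -/
def nxt {M : ℕ} (m : Fin M) : Fin M := ⟨(m + 1) % M, Nat.mod_lt _ m.pos⟩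

/-- The XXZ Hamiltonian `H⁰` with periodic boundary conditions. -/
def Ham (M : ℕ) (η : ℂ) : Module.End ℂ (QS M) :=
  ∑ m : Fin M,
    (siteOp m pauliX * siteOp (nxt m) pauliX + siteOp m pauliY * siteOp (nxt m) pauliY
      + Complex.cosh η • (siteOp m pauliZ * siteOp (nxt m) pauliZ - 1))

/-- The twisted Hamiltonian `H⁰_κ = 2 sinh η · T_κ′(η/2) T_κ(η/2)⁻¹ − 2M cosh η`. -/
def HamK (M : ℕ) (η κ : ℂ) : Module.End ℂ (QS M) :=
  (2 * Complex.sinh η) • (endDeriv (fun lam => Tk M η κ lam) (η/2)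
      * Ring.inverse (Tk M η κ (η/2)))
    - ((2 * M : ℂ) * Complex.cosh η) • 1

/-- The third component of total spin `S_z`. -/
def SzOp (M : ℕ) : Module.End ℂ (QS M) := (2 : ℂ)⁻¹ • ∑ m : Fin M, siteOp m pauliZ

/-- The generating function `Q_κ(m,t)`. -/
def Qgen (M : ℕ) (η : ℂ) {N : ℕ} (lam : Fin N → ℂ) (κ : ℂ) (m : ℕ) (t : ℝ) : ℂ :=
  vev (prodC M η lam * (Tk M η κ (η/2)) ^ m
      * endExp ((Complex.I * (t : ℂ)) • HamK M η κ)
      * (Ring.inverse (Ttm M η (η/2))) ^ m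
      * endExp ((-(Complex.I * (t : ℂ))) • Ham M η)
      * prodB M η lam)
    / vev (prodC M η lam * prodB M η lam)

/-- Partial derivative of a function of `N` complex variables in the `k`-th variable. -/
def pderiv {N : ℕ} (F : (Fin N → ℂ) → ℂ) (k : Fin N) (z : Fin N → ℂ) : ℂ :=
  deriv (fun w => F (Function.update z k w)) (z k)

/-- Iterated counterclockwise circle integral `∮_{|z_1-c_1|=r} dz_1 ⋯ ∮_{|z_n-c_n|=r} dz_n F(z)`. -/
def iterCircle : (n : ℕ) → ((Fin n → ℂ) → ℂ) → (Fin n → ℂ) → ℝ → ℂ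
  | 0, F, _, _ => F (fun i => i.elim0)
  | n + 1, F, c, r =>
      circleIntegral
        (fun z => iterCircle n (fun w => F (Fin.cons z w)) (fun i => c i.succ) r) (c 0) r

/-!
At `λ = η/2` every `L`-operator degenerates to `sinh η` times the permutation `P_{0n}` of the
auxiliary space with site `n`. Since `P_{0n} P_{0k} = P_{0k} P_{nk}`, the monodromy matrix collapses
to `(sinh η)^M P_{01} U`, where `U` is the cyclic shift of the sites. Hence `T(η/2) = (sinh η)^M U`
is invertible, while `B + C`, `i(B − C)` and `A − D` at `η/2` equal `σ^{x,y,z}_1 T(η/2)`; conjugation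
by `U` moves an operator at site `n` to site `n + 1`.
-/
open Equiv

section SiteOperators

variable {M : ℕ}

@[simp]
lemma siteOp_apply (n : Fin M) (A : Matrix (Fin 2) (Fin 2) ℂ) (f : QS M) (s : Conf M) :
    siteOp n A f s = ∑ j : Fin 2, A (s n) j * f (Function.update s n j) := rfl

lemma siteOp_add (n : Fin M) (A B : Matrix (Fin 2) (Fin 2) ℂ) :
    siteOp n (A + B) = siteOp n A + siteOp n B :=
  LinearMap.ext fun f => funext fun s => by simp [add_mul, Finset.sum_add_distrib]

lemma siteOp_sub (n : Fin M) (A B : Matrix (Fin 2) (Fin 2) ℂ) :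
    siteOp n (A - B) = siteOp n A - siteOp n B :=
  LinearMap.ext fun f => funext fun s => by simp [sub_mul, Finset.sum_sub_distrib]

lemma siteOp_smul (n : Fin M) (c : ℂ) (A : Matrix (Fin 2) (Fin 2) ℂ) :
    siteOp n (c • A) = c • siteOp n A :=
  LinearMap.ext fun f => funext fun s => by simp [mul_add, mul_assoc]

lemma siteOp_one (n : Fin M) : siteOp n 1 = 1 :=
  LinearMap.ext fun f => funext fun s => by simp [Matrix.one_apply]

lemma siteOp_single_apply (n : Fin M) (a b : Fin 2) (f : QS M) (s : Conf M) :
    siteOp n (Matrix.single b a 1) f s = if s n = b then f (Function.update s n a) else 0 := by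
  rw [siteOp_apply, Finset.sum_eq_single a (fun j _ hj => by simp [hj.symm]) (by simp)]
  simp [Matrix.single_apply, eq_comm]

def sitePerm : Perm (Fin M) →* Module.End ℂ (QS M) where
  toFun π := LinearMap.funLeft ℂ ℂ (· ∘ π)
  map_one' := rfl
  map_mul' _ _ := rfl

lemma sitePerm_apply (π : Perm (Fin M)) (f : QS M) (s : Conf M) :
    sitePerm π f s = f (s ∘ π) := rfl

lemma sitePerm_mul_siteOp (π : Perm (Fin M)) (n : Fin M) (A : Matrix (Fin 2) (Fin 2) ℂ) :
    sitePerm π * siteOp n A = siteOp (π n) A * sitePerm π :=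
  LinearMap.ext fun f => funext fun s => by
    simp [sitePerm_apply, Function.update_comp_equiv]

lemma sitePerm_conj_siteOp (π : Perm (Fin M)) (n : Fin M) (A : Matrix (Fin 2) (Fin 2) ℂ) :
    sitePerm π * siteOp n A * sitePerm π⁻¹ = siteOp (π n) A := by
  rw [sitePerm_mul_siteOp, mul_assoc, ← map_mul, mul_inv_cancel, map_one, mul_one]

/-- The permutation `P_{0n}` of the auxiliary space `ℂ²` with site `n`. -/
def auxSwap (n : Fin M) : Matrix (Fin 2) (Fin 2) (Module.End ℂ (QS M)) :=
  Matrix.of fun a b => siteOp n (Matrix.single b a 1)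

lemma auxSwap_mul_auxSwap {n k : Fin M} (h : n ≠ k) :
    auxSwap n * auxSwap k = auxSwap k * Matrix.scalar (Fin 2) (sitePerm (swap n k)) := by
  refine Matrix.ext fun a b => LinearMap.ext fun f => funext fun s => ?_
  rw [Matrix.scalar_apply, Matrix.mul_diagonal, Matrix.mul_apply, LinearMap.sum_apply,
    Finset.sum_apply, Finset.sum_eq_single (s n)]
  · simp only [auxSwap, Matrix.of_apply, Module.End.mul_apply, siteOp_single_apply,
      sitePerm_apply, Function.update_of_ne h.symm, ite_true]
    congr 2
    ext i
    simp only [Function.comp_apply, swap_apply_def, Function.update_apply]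
    split_ifs <;> simp_all
  · intro c _ hc
    simp only [auxSwap, Matrix.of_apply, Module.End.mul_apply, siteOp_single_apply,
      if_neg hc.symm]
  · simp

lemma prod_auxSwap_mul_auxSwap {k : Fin M} (ns : List (Fin M)) (hk : k ∉ ns) :
    (ns.map auxSwap).prod * auxSwap k
      = auxSwap k * Matrix.scalar (Fin 2) (sitePerm (ns.map (swap · k)).prod) := by
  induction ns with
  | nil => simp
  | cons n ns ih =>
    rw [List.mem_cons, not_or] at hk
    rw [List.map_cons, List.prod_cons, mul_assoc, ih hk.2, ← mul_assoc,
      auxSwap_mul_auxSwap (Ne.symm hk.1), mul_assoc, ← map_mul, ← map_mul, List.map_cons,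
      List.prod_cons]

end SiteOperators

lemma List.prod_map_smul {R A ι : Type*} [CommMonoid R] [Monoid A] [MulAction R A]
    [IsScalarTower R A A] [SMulCommClass R A A] (c : R) (f : ι → A) (l : List ι) :
    (l.map fun i => c • f i).prod = c ^ l.length • (l.map f).prod := by
  induction l with
  | nil => simp
  | cons i l ih => rw [List.map_cons, List.prod_cons, ih, smul_mul_smul_comm, ← pow_succ']; rfl

lemma Fin.val_cycleRange_apply {n : ℕ} (i j : Fin n) :
    (Fin.cycleRange j i : ℕ) = if i < j then (i : ℕ) + 1 else if i = j then 0 else (i : ℕ) := by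
  rcases le_or_gt i j with h | h
  · rw [Fin.coe_cycleRange_of_le h]
    split_ifs <;> first | rfl | omega
  · rw [Fin.cycleRange_of_gt h, if_neg (not_lt.2 h.le), if_neg h.ne']

lemma Fin.swap_zero_mul_cycleRange {n k : ℕ} (hk : k + 1 ≤ n) :
    swap (⟨k + 1, by omega⟩ : Fin (n + 1)) 0 * Fin.cycleRange ⟨k, by omega⟩
      = Fin.cycleRange ⟨k + 1, by omega⟩ := by
  ext i
  rw [Perm.mul_apply, swap_apply_def]
  split_ifs with h1 h2 <;>
    simp only [Fin.ext_iff, Fin.val_cycleRange_apply, Fin.lt_def, Fin.val_zero] at * <;>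
    split_ifs at * <;> omega

lemma Fin.prod_map_swap_zero_eq_cycleRange {n : ℕ} (k : ℕ) (hk : k ≤ n) :
    ((List.ofFn fun i : Fin k => (⟨i + 1, by omega⟩ : Fin (n + 1))).reverse.map (swap · 0)).prod
      = Fin.cycleRange ⟨k, by omega⟩ := by
  induction k with
  | zero => simp
  | succ k ih =>
    rw [List.ofFn_succ', List.concat_eq_append, List.reverse_append, List.reverse_singleton,
      List.singleton_append, List.map_cons, List.prod_cons]
    exact (congrArg _ (ih (by omega))).trans (Fin.swap_zero_mul_cycleRange hk)

section Monodromy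

variable {M : ℕ}

lemma Lmat_half (η : ℂ) (n : Fin M) : Lmat M η (η / 2) n = Complex.sinh η • auxSwap n := by
  have hsum : η / 2 + η / 2 = η := by ring
  have hup : !![Complex.sinh η, 0; 0, Complex.sinh 0] = Complex.sinh η • Matrix.single 0 0 1 := by
    ext i j; fin_cases i <;> fin_cases j <;> simp
  have hdown : !![Complex.sinh 0, 0; 0, Complex.sinh η] = Complex.sinh η • Matrix.single 1 1 1 := by
    ext i j; fin_cases i <;> fin_cases j <;> simp
  have hM : pauliM = Matrix.single 1 0 1 := by ext i j; fin_cases i <;> fin_cases j <;> rfl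
  have hP : pauliP = Matrix.single 0 1 1 := by ext i j; fin_cases i <;> fin_cases j <;> rfl
  rw [Lmat, hsum, sub_self, hup, hdown, hM, hP, siteOp_smul, siteOp_smul]
  ext a b : 1
  fin_cases a <;> fin_cases b <;> rfl

lemma Tmon_half [NeZero M] (η : ℂ) :
    Tmon M η (η / 2)
      = Complex.sinh η ^ M • (auxSwap 0 * Matrix.scalar (Fin 2) (sitePerm (finRotate M))) := by
  obtain ⟨m, rfl⟩ : ∃ m, M = m + 1 := Nat.exists_eq_add_one.2 (NeZero.pos M)
  have hsites : (0 : Fin (m + 1)) ∉ (List.ofFn Fin.succ).reverse := by simp [Fin.succ_ne_zero]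
  have hrot : ((List.ofFn Fin.succ).reverse.map (swap · 0)).prod = finRotate (m + 1) := by
    rw [← Fin.cycleRange_last]
    exact Fin.prod_map_swap_zero_eq_cycleRange m le_rfl
  have hfactors : (List.ofFn fun i : Fin m => Lmat (m + 1) η (η / 2) i.succ)
      = (List.ofFn Fin.succ).map (Lmat (m + 1) η (η / 2)) := by
    rw [List.map_ofFn]; rfl
  rw [Tmon, List.ofFn_succ, List.reverse_cons, List.prod_append, List.prod_singleton, hfactors,
    ← List.map_reverse, funext (Lmat_half η), List.prod_map_smul, smul_mul_smul_comm,
    prod_auxSwap_mul_auxSwap _ hsites, hrot, List.length_reverse, List.length_ofFn, pow_succ]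

lemma Tmon_half_apply [NeZero M] (η : ℂ) (a b : Fin 2) :
    Tmon M η (η / 2) a b
      = siteOp 0 (Matrix.single b a 1) * (Complex.sinh η ^ M • sitePerm (finRotate M)) := by
  rw [Tmon_half, Matrix.smul_apply, Matrix.scalar_apply, Matrix.mul_diagonal, mul_smul_comm]
  rfl

lemma Ttm_half [NeZero M] (η : ℂ) :
    Ttm M η (η / 2) = Complex.sinh η ^ M • sitePerm (finRotate M) := by
  have hone : (Matrix.single 0 0 1 + Matrix.single 1 1 1 : Matrix (Fin 2) (Fin 2) ℂ) = 1 := by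
    ext i j; fin_cases i <;> fin_cases j <;> simp
  rw [Ttm, Tk, one_smul, Aop, Dop, Tmon_half_apply, Tmon_half_apply, ← add_mul, ← siteOp_add,
    hone, siteOp_one, one_mul]

lemma Tmon_half_apply_eq_mul_Ttm [NeZero M] (η : ℂ) (a b : Fin 2) :
    Tmon M η (η / 2) a b = siteOp 0 (Matrix.single b a 1) * Ttm M η (η / 2) := by
  rw [Tmon_half_apply, Ttm_half]

open Fin.NatCast in
lemma finRotate_pow_apply_zero [NeZero M] (j : Fin M) : (finRotate M ^ (j : ℕ)) 0 = j := by
  suffices h : ∀ k : ℕ, (finRotate M ^ k) 0 = (k : Fin M) by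
    rw [h, Fin.cast_val_eq_self]
  intro k
  induction k with
  | zero => rfl
  | succ k ih => rw [pow_succ', Perm.mul_apply, ih, finRotate_apply, Nat.cast_succ]

lemma Ttm_half_mul_inverse [NeZero M] {η : ℂ} (hη : Complex.sinh η ≠ 0) :
    Ttm M η (η / 2) * ((Complex.sinh η ^ M)⁻¹ • sitePerm (finRotate M)⁻¹) = 1 := by
  rw [Ttm_half, smul_mul_smul_comm, ← map_mul, mul_inv_cancel, map_one,
    mul_inv_cancel₀ (pow_ne_zero _ hη), one_smul]

lemma inverse_mul_Ttm_half [NeZero M] {η : ℂ} (hη : Complex.sinh η ≠ 0) :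
    ((Complex.sinh η ^ M)⁻¹ • sitePerm (finRotate M)⁻¹) * Ttm M η (η / 2) = 1 := by
  rw [Ttm_half, smul_mul_smul_comm, ← map_mul, inv_mul_cancel, map_one,
    inv_mul_cancel₀ (pow_ne_zero _ hη), one_smul]

lemma isUnit_Ttm_half [NeZero M] {η : ℂ} (hη : Complex.sinh η ≠ 0) :
    IsUnit (Ttm M η (η / 2)) :=
  ⟨⟨_, _, Ttm_half_mul_inverse hη, inverse_mul_Ttm_half hη⟩, rfl⟩

lemma inverse_Ttm_half [NeZero M] {η : ℂ} (hη : Complex.sinh η ≠ 0) :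
    Ring.inverse (Ttm M η (η / 2)) = (Complex.sinh η ^ M)⁻¹ • sitePerm (finRotate M)⁻¹ :=
  Ring.inverse_unit ⟨_, _, Ttm_half_mul_inverse hη, inverse_mul_Ttm_half hη⟩

lemma Ttm_half_pow_conj [NeZero M] {η : ℂ} (hη : Complex.sinh η ≠ 0) (j : Fin M)
    (A : Matrix (Fin 2) (Fin 2) ℂ) :
    Ttm M η (η / 2) ^ (j : ℕ) * (siteOp 0 A * Ttm M η (η / 2))
      * Ring.inverse (Ttm M η (η / 2)) ^ ((j : ℕ) + 1) = siteOp j A := by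
  rw [inverse_Ttm_half hη, Ttm_half]
  have hscalar : ((Complex.sinh η ^ M)⁻¹ ^ ((j : ℕ) + 1)
      * (Complex.sinh η ^ M * (Complex.sinh η ^ M) ^ (j : ℕ))) = 1 := by
    rw [← pow_succ', inv_pow, inv_mul_cancel₀ (pow_ne_zero _ (pow_ne_zero _ hη))]
  have hperm : finRotate M * (finRotate M)⁻¹ ^ ((j : ℕ) + 1) = (finRotate M ^ (j : ℕ))⁻¹ := by
    group
  simp only [smul_pow, ← map_pow, smul_mul_assoc, mul_smul_comm, smul_smul]
  rw [hscalar, one_smul, mul_assoc, mul_assoc (siteOp 0 A), ← map_mul, hperm, ← mul_assoc,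
    sitePerm_conj_siteOp, finRotate_pow_apply_zero]

lemma Bop_add_Cop_half [NeZero M] (η : ℂ) :
    Bop M η (η / 2) + Cop M η (η / 2) = siteOp 0 pauliX * Ttm M η (η / 2) := by
  have hX : Matrix.single 1 0 1 + Matrix.single 0 1 1 = pauliX := by
    ext i j; fin_cases i <;> fin_cases j <;> simp [pauliX]
  rw [Bop, Cop, Tmon_half_apply_eq_mul_Ttm, Tmon_half_apply_eq_mul_Ttm, ← add_mul, ← siteOp_add, hX]

lemma I_smul_Bop_sub_Cop_half [NeZero M] (η : ℂ) :
    Complex.I • (Bop M η (η / 2) - Cop M η (η / 2)) = siteOp 0 pauliY * Ttm M η (η / 2) := by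
  have hY : Complex.I • (Matrix.single 1 0 1 - Matrix.single 0 1 1) = pauliY := by
    ext i j; fin_cases i <;> fin_cases j <;> simp [pauliY]
  rw [Bop, Cop, Tmon_half_apply_eq_mul_Ttm, Tmon_half_apply_eq_mul_Ttm, ← sub_mul, ← siteOp_sub,
    ← smul_mul_assoc, ← siteOp_smul, hY]

lemma Aop_sub_Dop_half [NeZero M] (η : ℂ) :
    Aop M η (η / 2) - Dop M η (η / 2) = siteOp 0 pauliZ * Ttm M η (η / 2) := by
  have hZ : Matrix.single 0 0 1 - Matrix.single 1 1 1 = pauliZ := by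
    ext i j; fin_cases i <;> fin_cases j <;> simp [pauliZ]
  rw [Aop, Dop, Tmon_half_apply_eq_mul_Ttm, Tmon_half_apply_eq_mul_Ttm, ← sub_mul, ← siteOp_sub, hZ]

end Monodromy

theorem quantum_inverse_scattering_problem_general
    (M : ℕ) (hM : 2 ≤ M) (η : ℂ) (hη : Complex.sinh η ≠ 0) :
    IsUnit (Ttm M η (η/2))
    ∧ ∀ j : Fin M,
        siteOp j pauliX = (Ttm M η (η/2)) ^ (j : ℕ) * (Bop M η (η/2) + Cop M η (η/2)) *
            (Ring.inverse (Ttm M η (η/2))) ^ ((j : ℕ) + 1)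
        ∧ siteOp j pauliY = (Ttm M η (η/2)) ^ (j : ℕ) *
            (Complex.I • (Bop M η (η/2) - Cop M η (η/2))) *
            (Ring.inverse (Ttm M η (η/2))) ^ ((j : ℕ) + 1)
        ∧ siteOp j pauliZ = (Ttm M η (η/2)) ^ (j : ℕ) * (Aop M η (η/2) - Dop M η (η/2)) *
            (Ring.inverse (Ttm M η (η/2))) ^ ((j : ℕ) + 1) := by
  have : NeZero M := ⟨by omega⟩
  refine ⟨isUnit_Ttm_half hη, fun j => ⟨?_, ?_, ?_⟩⟩
  · rw [Bop_add_Cop_half, Ttm_half_pow_conj hη]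
  · rw [I_smul_Bop_sub_Cop_half, Ttm_half_pow_conj hη]
  · rw [Aop_sub_Dop_half, Ttm_half_pow_conj hη]

/-- Solution of the quantum inverse scattering problem. -/
theorem quantum_inverse_scattering_problem
    (M : ℕ) (hM : 2 ≤ M) (hMe : Even M) (η : ℂ) (hη : Complex.sinh η ≠ 0) :
    IsUnit (Ttm M η (η/2))
    ∧ ∀ j : Fin M,
        siteOp j pauliX = (Ttm M η (η/2)) ^ (j : ℕ) * (Bop M η (η/2) + Cop M η (η/2)) *
            (Ring.inverse (Ttm M η (η/2))) ^ ((j : ℕ) + 1)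
        ∧ siteOp j pauliY = (Ttm M η (η/2)) ^ (j : ℕ) *
            (Complex.I • (Bop M η (η/2) - Cop M η (η/2))) *
            (Ring.inverse (Ttm M η (η/2))) ^ ((j : ℕ) + 1)
        ∧ siteOp j pauliZ = (Ttm M η (η/2)) ^ (j : ℕ) * (Aop M η (η/2) - Dop M η (η/2)) *
            (Ring.inverse (Ttm M η (η/2))) ^ ((j : ℕ) + 1) :=
  quantum_inverse_scattering_problem_general M hM η hη

end
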